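/- Let B(x) = ε(x+a)(N−x) and D(x) = ε x(b+N−x) (Hahn case, with ε = 1 if a,b > 0). Then the Hahn polynomial Q_n(x) = ₃F₂(−n, n+a+b−1, −x; a, −N; 1) satisfies the difference equation B(x)(Q_n(x) − Q_n(x+1)) + D(x)(Q_n(x) − Q_n(x−1)) = ε n(n+a+b−1) Q_n(x) for 0 ≤ x ≤ N. -/

import Mathlib

/-- The Pochhammer symbol `(a)_k = a(a+1)⋯(a+k-1)` for real `a`. -/
noncomputable def poch (a : ℝ) (k : ℕ) : ℝ := ∏ j ∈ Finset.range k, (a + j)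

/-- The Hahn polynomial `Q_n(x) = ₃F₂(-n, n+a+b-1, -x; a, -N; 1)` (terminating sum). -/
noncomputable def hahn (a b : ℝ) (N n x : ℕ) : ℝ :=
  ∑ k ∈ Finset.range (n + 1),
    poch (-(n : ℝ)) k * poch ((n : ℝ) + a + b - 1) k * poch (-(x : ℝ)) k /
      (poch a k * poch (-(N : ℝ)) k * (Nat.factorial k))

/-!
Write `L f (x) = (x+a)(N-x)(f x - f (x+1)) + x(b+N-x)(f x - f (x-1))` (this is `hahnOp`) and
`φ_k(x) = (-x)_k`.
Since `φ_k(x) - φ_k(x+1) = k φ_{k-1}(x)` and `x (φ_k(x) - φ_k(x-1)) = k φ_k(x)`, the operator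
is upper bidiagonal in the basis `φ_k`:
`L φ_k = k (a+k-1)(N-k+1) φ_{k-1} + k (k+a+b-1) φ_k`.
The coefficients `A_k` of `Q_n = ∑ A_k φ_k` satisfy
`(k+1)(a+k)(N-k) A_{k+1} = (n-k)(n+k+a+b-1) A_k`, so the coefficient of `φ_k` in `L Q_n` is
`(k(k+a+b-1) + (n-k)(n+k+a+b-1)) A_k = n(n+a+b-1) A_k`.
-/

open Finset Nat

section Pochhammer

@[simp]
lemma poch_zero (a : ℝ) : poch a 0 = 1 := prod_range_zero _

lemma poch_succ (a : ℝ) (k : ℕ) : poch a (k + 1) = poch a k * (a + k) := prod_range_succ _ _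

lemma poch_succ' (a : ℝ) (k : ℕ) : poch a (k + 1) = a * poch (a + 1) k := by
  simp only [poch, prod_range_succ', Nat.cast_add, Nat.cast_one, Nat.cast_zero, add_zero,
    add_assoc, add_comm (1 : ℝ), mul_comm a]

lemma poch_pos {a : ℝ} (ha : 0 < a) (k : ℕ) : 0 < poch a k :=
  prod_pos fun _ _ ↦ by positivity

lemma poch_neg_natCast_ne_zero {N k : ℕ} (hk : k ≤ N) : poch (-(N : ℝ)) k ≠ 0 := by
  refine prod_ne_zero_iff.mpr fun j hj ↦ ?_
  have : (j : ℝ) < N := by exact_mod_cast (mem_range.mp hj).trans_le hk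
  linarith

lemma poch_neg_sub_poch_neg_add_one (x : ℝ) (k : ℕ) :
    poch (-x) (k + 1) - poch (-(x + 1)) (k + 1) = (k + 1) * poch (-x) k := by
  induction k with
  | zero => simp [poch_succ]
  | succ k ih =>
    rw [poch_succ (-(x + 1)) (k + 1), poch_succ (-x) (k + 1)]
    push_cast
    linear_combination (k - x) * ih - (k + 1) * poch_succ (-x) k

lemma mul_poch_neg_sub_poch_neg_sub_one (x : ℝ) (k : ℕ) :
    x * (poch (-x) k - poch (-(x - 1)) k) = k * poch (-x) k := by
  cases k with
  | zero => simp
  | succ k =>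
    have hdiff := poch_neg_sub_poch_neg_add_one (x - 1) k
    have hshift := poch_succ' (-x) k
    have hneg : -(x - 1) = -x + 1 := by ring
    rw [sub_add_cancel, hneg] at hdiff
    rw [hneg]
    push_cast
    linear_combination -x * hdiff - (k + 1) * hshift

end Pochhammer

section HahnOperator

noncomputable def hahnOp (a b N : ℝ) (f : ℝ → ℝ) (x : ℝ) : ℝ :=
  (x + a) * (N - x) * (f x - f (x + 1)) + x * (b + N - x) * (f x - f (x - 1))

variable (a b N : ℝ)

lemma hahnOp_sum {ι : Type*} (s : Finset ι) (c : ι → ℝ) (f : ι → ℝ → ℝ) (x : ℝ) :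
    hahnOp a b N (fun y ↦ ∑ i ∈ s, c i * f i y) x =
      ∑ i ∈ s, c i * hahnOp a b N (f i) x := by
  simp only [hahnOp, ← sum_sub_distrib, mul_sum, ← sum_add_distrib]
  exact sum_congr rfl fun _ _ ↦ by ring

lemma hahnOp_poch_zero (x : ℝ) : hahnOp a b N (fun y ↦ poch (-y) 0) x = 0 := by
  simp [hahnOp]

lemma hahnOp_poch_succ (x : ℝ) (k : ℕ) :
    hahnOp a b N (fun y ↦ poch (-y) (k + 1)) x =
      (k + 1) * (a + k) * (N - k) * poch (-x) k + (k + 1) * (k + a + b) * poch (-x) (k + 1) := by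
  have hfwd := poch_neg_sub_poch_neg_add_one x k
  have hbwd := mul_poch_neg_sub_poch_neg_sub_one x (k + 1)
  have hstep := poch_succ (-x) k
  push_cast at hbwd
  simp only [hahnOp]
  linear_combination (x + a) * (N - x) * hfwd + (b + N - x) * hbwd
    + (k + 1) * (N - x - k - a) * hstep

end HahnOperator

section HahnPolynomial

noncomputable def hahnCoeff (a b : ℝ) (N n k : ℕ) : ℝ :=
  poch (-(n : ℝ)) k * poch ((n : ℝ) + a + b - 1) k / (poch a k * poch (-(N : ℝ)) k * k !)

-- `hahn` takes a natural `x`, so `hahn … (x - 1)` is truncated at `x = 0`; here `x` is real.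
noncomputable def hahnPoly (a b : ℝ) (N n : ℕ) (x : ℝ) : ℝ :=
  ∑ k ∈ range (n + 1), hahnCoeff a b N n k * poch (-x) k

lemma hahn_eq_hahnPoly (a b : ℝ) (N n x : ℕ) : hahn a b N n x = hahnPoly a b N n x :=
  sum_congr rfl fun _ _ ↦ by rw [hahnCoeff]; ring

variable {a : ℝ} (b : ℝ) {N : ℕ}

lemma hahnCoeff_succ (n : ℕ) (ha : 0 < a) (k : ℕ) (hk : k < N) :
    (k + 1) * (a + k) * (N - k) * hahnCoeff a b N n (k + 1) =
      (n - k) * (n + k + a + b - 1) * hahnCoeff a b N n k := by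
  have hpa := (poch_pos ha k).ne'
  have hpN := poch_neg_natCast_ne_zero (N := N) hk.le
  have hfac : (k ! : ℝ) ≠ 0 := by positivity
  have hak : a + k ≠ 0 := by positivity
  have hNk : -(N : ℝ) + k ≠ 0 := by
    have : (k : ℝ) < N := by exact_mod_cast hk
    linarith
  simp only [hahnCoeff, poch_succ, factorial_succ, cast_mul, cast_add, cast_one]
  field_simp
  ring

theorem hahnOp_hahnPoly {n : ℕ} (ha : 0 < a) (hn : n ≤ N) (x : ℝ) :
    hahnOp a b N (hahnPoly a b N n) x = n * (n + a + b - 1) * hahnPoly a b N n x := by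
  have hdiag (k : ℕ) (hk : k < n) :
      hahnCoeff a b N n (k + 1) * hahnOp a b N (fun y ↦ poch (-y) (k + 1)) x =
        (n - k) * (n + k + a + b - 1) * (hahnCoeff a b N n k * poch (-x) k)
          + (k + 1) * (k + a + b) * (hahnCoeff a b N n (k + 1) * poch (-x) (k + 1)) := by
    rw [hahnOp_poch_succ]
    linear_combination poch (-x) k * hahnCoeff_succ b n ha k (hk.trans_le hn)
  calc hahnOp a b N (hahnPoly a b N n) x
      = ∑ k ∈ range n,
          hahnCoeff a b N n (k + 1) * hahnOp a b N (fun y ↦ poch (-y) (k + 1)) x := by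
        unfold hahnPoly
        rw [hahnOp_sum, sum_range_succ', hahnOp_poch_zero, mul_zero, add_zero]
    _ = ∑ k ∈ range (n + 1), (n - k) * (n + k + a + b - 1) * (hahnCoeff a b N n k * poch (-x) k)
          + ∑ k ∈ range (n + 1), k * (k + a + b - 1) * (hahnCoeff a b N n k * poch (-x) k) := by
        rw [sum_congr rfl fun k hk ↦ hdiag k (mem_range.mp hk), sum_add_distrib,
          sum_range_succ _ n, sum_range_succ' _ n]
        simp only [cast_add, cast_one, cast_zero, sub_self, zero_mul, add_zero, zero_add]
        congr 1
        exact sum_congr rfl fun k _ ↦ by ring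
    _ = n * (n + a + b - 1) * hahnPoly a b N n x := by
        rw [← sum_add_distrib, hahnPoly, mul_sum]
        exact sum_congr rfl fun k _ ↦ by ring

end HahnPolynomial

theorem stmt_15_general (a b : ℝ) (ha : 0 < a) (N : ℕ)
    (n : ℕ) (hn : n ≤ N) :
    ∀ x : ℕ, x ≤ N →
      ((x : ℝ) + a) * ((N : ℝ) - (x : ℝ)) * (hahn a b N n x - hahn a b N n (x + 1)) +
      (x : ℝ) * (b + (N : ℝ) - (x : ℝ)) * (hahn a b N n x - hahn a b N n (x - 1)) =
      (n : ℝ) * ((n : ℝ) + a + b - 1) * hahn a b N n x := by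
  intro x _
  have h := hahnOp_hahnPoly b ha hn x
  simp only [hahnOp] at h
  simp only [hahn_eq_hahnPoly, cast_add, cast_one]
  cases x with
  | zero => simpa using h
  | succ x => simpa using h

theorem stmt_15 (a b : ℝ) (ha : 0 < a) (hb : 0 < b) (N : ℕ) (hN : 1 ≤ N)
    (n : ℕ) (hn : n ≤ N) :
    ∀ x : ℕ, x ≤ N →
      ((x : ℝ) + a) * ((N : ℝ) - (x : ℝ)) * (hahn a b N n x - hahn a b N n (x + 1)) +
      (x : ℝ) * (b + (N : ℝ) - (x : ℝ)) * (hahn a b N n x - hahn a b N n (x - 1)) =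
      (n : ℝ) * ((n : ℝ) + a + b - 1) * hahn a b N n x :=
  stmt_15_general a b ha N n hn
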